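/- Let d ∈ {1, 2, …, 9}. Then lim_{x→∞} (1/log x) · ∑_{n ≤ x, n begins with digit d in base 10} 1/n = log_{10}(1 + 1/d), where the sum is over positive integers n ≤ x whose base-10 expansion begins with the digit d. -/

import Mathlib

open Filter Real

section Aux
open Finset
open scoped Classical

private lemma log_step_le (b : ℕ) (hb : 1 ≤ b) :
    Real.log (b+1) - Real.log b ≤ 1 / b := by
  have hb0 : (0:ℝ) < b := by exact_mod_cast hb
  have h := Real.log_le_sub_one_of_pos (x := ((b:ℝ)+1)/b) (by positivity)
  rw [Real.log_div (by positivity) (ne_of_gt hb0)] at h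
  have : ((b:ℝ)+1)/b - 1 = 1/b := by field_simp; ring
  linarith [this ▸ h]

private lemma log_step_ge (b : ℕ) (hb : 1 ≤ b) :
    1 / ((b:ℝ)+1) ≤ Real.log (b+1) - Real.log b := by
  have hb0 : (0:ℝ) < b := by exact_mod_cast hb
  have h := Real.log_le_sub_one_of_pos (x := (b:ℝ)/((b:ℝ)+1)) (by positivity)
  rw [Real.log_div (ne_of_gt hb0) (by positivity)] at h
  have : (b:ℝ)/((b:ℝ)+1) - 1 = -(1/((b:ℝ)+1)) := by field_simp; ring
  linarith [this ▸ h]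

private lemma harmonic_Ico_bounds (a : ℕ) (ha : 1 ≤ a) : ∀ b, a ≤ b →
    (Real.log b - Real.log a ≤ ∑ n ∈ Finset.Ico a b, (1:ℝ)/n ∧
     ∑ n ∈ Finset.Ico a b, (1:ℝ)/n ≤ Real.log b - Real.log a + 1/a - 1/b) := by
  intro b hb
  induction b, hb using Nat.le_induction with
  | base => simp
  | succ b hab ih =>
    have hb1 : 1 ≤ b := le_trans ha hab
    have hb0 : (0:ℝ) < b := by exact_mod_cast hb1
    rw [Finset.sum_Ico_succ_top hab]
    have h1 := log_step_le b hb1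
    have h2 := log_step_ge b hb1
    push_cast
    push_cast at ih h1 h2
    constructor <;> obtain ⟨il, iu⟩ := ih <;> linarith

private lemma block_bounds (d t : ℕ) (hd : 1 ≤ d) :
    (Real.log ((d:ℝ)+1) - Real.log d ≤ ∑ n ∈ Finset.Ico (d*10^t) ((d+1)*10^t), (1:ℝ)/n ∧
     ∑ n ∈ Finset.Ico (d*10^t) ((d+1)*10^t), (1:ℝ)/n
       ≤ Real.log ((d:ℝ)+1) - Real.log d + 1/((d:ℝ)*10^t)) := by
  have hp : (0:ℕ) < 10^t := Nat.pow_pos (n := t) (by norm_num)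
  have ha : 1 ≤ d*10^t := Nat.one_le_iff_ne_zero.mpr (by positivity)
  have hab : d*10^t ≤ (d+1)*10^t := Nat.mul_le_mul_right _ (Nat.le_succ d)
  obtain ⟨hl, hu⟩ := harmonic_Ico_bounds _ ha _ hab
  have hd0 : (0:ℝ) < d := by exact_mod_cast hd
  have hpr : (0:ℝ) < (10:ℝ)^t := by positivity
  have hcast : Real.log ((d+1)*10^t : ℕ) - Real.log (d*10^t : ℕ)
      = Real.log ((d:ℝ)+1) - Real.log d := by
    push_cast
    rw [Real.log_mul (by positivity) (ne_of_gt hpr), Real.log_mul (ne_of_gt hd0) (ne_of_gt hpr)]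
    ring
  rw [hcast] at hl hu
  constructor
  · exact hl
  · have h1 : (1:ℝ)/((d*10^t : ℕ):ℝ) = 1/((d:ℝ)*10^t) := by push_cast; ring
    rw [h1] at hu
    have h2 : (0:ℝ) < 1/(((d+1)*10^t : ℕ):ℝ) := by positivity
    linarith

private lemma benford_tsum_eq (d : ℕ) (hd : 1 ≤ d) (x : ℝ) :
    (∑' n : {n : ℕ // (∃ t : ℕ, d * 10 ^ t ≤ n ∧ n < (d + 1) * 10 ^ t) ∧ (n : ℝ) ≤ x},
        (1 : ℝ) / (n.1 : ℝ))
      = ∑ n ∈ (Finset.Icc 1 ⌊x⌋₊).filter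
          (fun n => ∃ t : ℕ, d * 10 ^ t ≤ n ∧ n < (d + 1) * 10 ^ t), (1:ℝ)/n := by
  refine Eq.trans (_root_.tsum_subtype
      {n : ℕ | (∃ t : ℕ, d * 10 ^ t ≤ n ∧ n < (d + 1) * 10 ^ t) ∧ (n : ℝ) ≤ x}
      (fun n => (1:ℝ)/n)) ?_
  rw [tsum_eq_sum (s := (Finset.Icc 1 ⌊x⌋₊).filter
      (fun n => ∃ t : ℕ, d * 10 ^ t ≤ n ∧ n < (d + 1) * 10 ^ t)) ?_]
  · refine Finset.sum_congr rfl fun n hn => ?_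
    rw [Finset.mem_filter, Finset.mem_Icc] at hn
    obtain ⟨⟨h1, h2⟩, hP⟩ := hn
    have hx0 : (0:ℝ) ≤ x := by
      by_contra hneg
      push_neg at hneg
      rw [Nat.floor_of_nonpos hneg.le] at h2
      omega
    have hmem : n ∈ {n : ℕ | (∃ t : ℕ, d * 10 ^ t ≤ n ∧ n < (d + 1) * 10 ^ t) ∧ (n : ℝ) ≤ x} :=
      ⟨hP, le_trans (by exact_mod_cast Nat.cast_le.mpr h2) (Nat.floor_le hx0)⟩
    exact Set.indicator_of_mem hmem _
  · intro n hn
    rw [Finset.mem_filter, Finset.mem_Icc] at hn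
    refine Set.indicator_of_notMem (fun hmem => hn ?_) _
    obtain ⟨⟨t, ht1, ht2⟩, hx⟩ := hmem
    have h1 : 1 ≤ n := le_trans (Nat.one_le_iff_ne_zero.mpr (by positivity)) ht1
    exact ⟨⟨h1, Nat.le_floor hx⟩, t, ht1, ht2⟩

private lemma blocks_disj (d : ℕ) (hd : 1 ≤ d) {s t : ℕ} (h : s < t) :
    (d+1)*10^s ≤ d*10^t := by
  calc (d+1)*10^s ≤ (d*10)*10^s := Nat.mul_le_mul_right _ (by omega)
  _ = d*10^(s+1) := by ring
  _ ≤ d*10^t := Nat.mul_le_mul_left _ (Nat.pow_le_pow_right (by norm_num) h)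

private lemma blocks_pairwise (d : ℕ) (hd : 1 ≤ d) :
    ∀ (s : Finset ℕ), (↑s : Set ℕ).PairwiseDisjoint
      (fun t => Finset.Ico (d*10^t) ((d+1)*10^t)) := by
  intro s a _ b _ hab
  rcases Nat.lt_or_ge a b with h | h
  · refine Finset.disjoint_left.mpr fun n hn hn' => ?_
    rw [Finset.mem_Ico] at hn hn'
    have := blocks_disj d hd h
    omega
  · have h' : b < a := lt_of_le_of_ne h (Ne.symm hab)
    refine Finset.disjoint_left.mpr fun n hn hn' => ?_
    rw [Finset.mem_Ico] at hn hn'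
    have := blocks_disj d hd h'
    omega

private lemma sum_lower (d : ℕ) (hd : 1 ≤ d) (x : ℝ) (T : ℕ)
    (hT : ∀ t < T, (((d+1) * 10^t : ℕ) : ℝ) ≤ x) :
    (T:ℝ) * (Real.log ((d:ℝ)+1) - Real.log d)
      ≤ ∑ n ∈ (Finset.Icc 1 ⌊x⌋₊).filter
          (fun n => ∃ t : ℕ, d * 10 ^ t ≤ n ∧ n < (d + 1) * 10 ^ t), (1:ℝ)/n := by
  have hsub : (Finset.range T).biUnion (fun t => Finset.Ico (d*10^t) ((d+1)*10^t))
      ⊆ (Finset.Icc 1 ⌊x⌋₊).filter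
          (fun n => ∃ t : ℕ, d * 10 ^ t ≤ n ∧ n < (d + 1) * 10 ^ t) := by
    intro n hn
    rw [Finset.mem_biUnion] at hn
    obtain ⟨t, ht, hn⟩ := hn
    rw [Finset.mem_Ico] at hn
    rw [Finset.mem_filter, Finset.mem_Icc]
    have h1 : 1 ≤ n := le_trans (Nat.one_le_iff_ne_zero.mpr (by positivity)) hn.1
    have hx : (n:ℝ) ≤ x := by
      have : (n:ℝ) < (((d+1)*10^t : ℕ):ℝ) := by exact_mod_cast hn.2
      exact le_of_lt (lt_of_lt_of_le this (hT t (Finset.mem_range.mp ht)))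
    exact ⟨⟨h1, Nat.le_floor hx⟩, t, hn.1, hn.2⟩
  calc (T:ℝ) * (Real.log ((d:ℝ)+1) - Real.log d)
      = ∑ _t ∈ Finset.range T, (Real.log ((d:ℝ)+1) - Real.log d) := by
        rw [Finset.sum_const, Finset.card_range, nsmul_eq_mul]
  _ ≤ ∑ t ∈ Finset.range T, ∑ n ∈ Finset.Ico (d*10^t) ((d+1)*10^t), (1:ℝ)/n :=
        Finset.sum_le_sum fun t _ => (block_bounds d t hd).1
  _ = ∑ n ∈ (Finset.range T).biUnion (fun t => Finset.Ico (d*10^t) ((d+1)*10^t)), (1:ℝ)/n :=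
        (Finset.sum_biUnion (blocks_pairwise d hd _)).symm
  _ ≤ _ := Finset.sum_le_sum_of_subset_of_nonneg hsub (fun n _ _ => by positivity)

private lemma geom_bound (T : ℕ) : ∑ t ∈ Finset.range T, ((1:ℝ)/10)^t ≤ 2 := by
  rw [geom_sum_eq (by norm_num : (1/10:ℝ) ≠ 1)]
  have h1 : (0:ℝ) < (1/10:ℝ)^T := by positivity
  rw [div_le_iff_of_neg (by norm_num : (1/10:ℝ) - 1 < 0)]
  linarith

private lemma sum_upper (d : ℕ) (hd : 1 ≤ d) (x : ℝ) (T : ℕ)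
    (hT : ∀ t : ℕ, (((10:ℕ)^t : ℕ) : ℝ) ≤ x → t < T) :
    ∑ n ∈ (Finset.Icc 1 ⌊x⌋₊).filter
        (fun n => ∃ t : ℕ, d * 10 ^ t ≤ n ∧ n < (d + 1) * 10 ^ t), (1:ℝ)/n
      ≤ (T:ℝ) * (Real.log ((d:ℝ)+1) - Real.log d) + 2 := by
  have hsub : (Finset.Icc 1 ⌊x⌋₊).filter
      (fun n => ∃ t : ℕ, d * 10 ^ t ≤ n ∧ n < (d + 1) * 10 ^ t)
      ⊆ (Finset.range T).biUnion (fun t => Finset.Ico (d*10^t) ((d+1)*10^t)) := by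
    intro n hn
    rw [Finset.mem_filter, Finset.mem_Icc] at hn
    obtain ⟨⟨h1, h2⟩, t, ht1, ht2⟩ := hn
    have hx0 : (0:ℝ) ≤ x := by
      by_contra hneg
      push_neg at hneg
      rw [Nat.floor_of_nonpos hneg.le] at h2
      omega
    have hnx : (n:ℝ) ≤ x := le_trans (by exact_mod_cast Nat.cast_le.mpr h2) (Nat.floor_le hx0)
    have h10 : ((10:ℕ)^t : ℕ) ≤ n :=
      le_trans (by nlinarith [Nat.pow_pos (n := t) (by norm_num : 0 < 10)]) ht1
    have htT : t < T := hT t (le_trans (by exact_mod_cast Nat.cast_le.mpr h10) hnx)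
    rw [Finset.mem_biUnion]
    exact ⟨t, Finset.mem_range.mpr htT, Finset.mem_Ico.mpr ⟨ht1, ht2⟩⟩
  calc ∑ n ∈ (Finset.Icc 1 ⌊x⌋₊).filter
        (fun n => ∃ t : ℕ, d * 10 ^ t ≤ n ∧ n < (d + 1) * 10 ^ t), (1:ℝ)/n
      ≤ ∑ n ∈ (Finset.range T).biUnion (fun t => Finset.Ico (d*10^t) ((d+1)*10^t)), (1:ℝ)/n :=
        Finset.sum_le_sum_of_subset_of_nonneg hsub (fun n _ _ => by positivity)
  _ = ∑ t ∈ Finset.range T, ∑ n ∈ Finset.Ico (d*10^t) ((d+1)*10^t), (1:ℝ)/n :=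
        Finset.sum_biUnion (blocks_pairwise d hd _)
  _ ≤ ∑ t ∈ Finset.range T, ((Real.log ((d:ℝ)+1) - Real.log d) + 1/((d:ℝ)*10^t)) :=
        Finset.sum_le_sum fun t _ => (block_bounds d t hd).2
  _ = (T:ℝ) * (Real.log ((d:ℝ)+1) - Real.log d) + ∑ t ∈ Finset.range T, 1/((d:ℝ)*10^t) := by
        rw [Finset.sum_add_distrib, Finset.sum_const, Finset.card_range, nsmul_eq_mul]
  _ ≤ (T:ℝ) * (Real.log ((d:ℝ)+1) - Real.log d) + 2 := by
        have hle : ∑ t ∈ Finset.range T, 1/((d:ℝ)*10^t)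
            ≤ ∑ t ∈ Finset.range T, ((1:ℝ)/10)^t := by
          refine Finset.sum_le_sum fun t _ => ?_
          have hd0 : (1:ℝ) ≤ d := by exact_mod_cast hd
          rw [div_pow, one_pow]
          apply one_div_le_one_div_of_le (by positivity)
          nlinarith [pow_pos (by norm_num : (0:ℝ) < 10) t]
        linarith [geom_bound T]

end Aux

/-- The positive integers satisfy Benford's law logarithmically: the logarithmic
density of integers with leading base-10 digit `d` is `log₁₀(1 + 1/d)`. -/
theorem integers_benford_logarithmic (d : ℕ) (hd₁ : 1 ≤ d) (hd₉ : d ≤ 9) :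
    Tendsto (fun x : ℝ =>
        (∑' n : {n : ℕ // (∃ t : ℕ, d * 10 ^ t ≤ n ∧ n < (d + 1) * 10 ^ t) ∧ (n : ℝ) ≤ x},
          (1 : ℝ) / (n.1 : ℝ)) / Real.log x)
      atTop (nhds (Real.logb 10 (1 + 1 / (d : ℝ)))) := by
  classical
  have hd0 : (0:ℝ) < d := by exact_mod_cast hd₁
  set L : ℝ := Real.log ((d:ℝ)+1) - Real.log d with hLdef
  have hlog10 : (0:ℝ) < Real.log 10 := Real.log_pos (by norm_num)
  have hL0 : 0 ≤ L := by
    have : Real.log (d:ℝ) ≤ Real.log ((d:ℝ)+1) :=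
      Real.log_le_log (by positivity) (by linarith)
    simpa [hLdef] using this
  have htarget : Real.logb 10 (1 + 1 / (d : ℝ)) = L / Real.log 10 := by
    rw [Real.logb]
    congr 1
    have h1 : 1 + 1/(d:ℝ) = ((d:ℝ)+1)/d := by field_simp
    rw [h1, Real.log_div (by positivity) (ne_of_gt hd0)]
  rw [htarget]
  have h0 : Tendsto (fun x : ℝ => (Real.log x)⁻¹) atTop (nhds 0) :=
    Real.tendsto_log_atTop.inv_tendsto_atTop
  have hglim : Tendsto (fun x : ℝ =>
      L / Real.log 10 - (Real.log ((d:ℝ)+1) * L / Real.log 10) * (Real.log x)⁻¹)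
      atTop (nhds (L / Real.log 10)) := by
    have := tendsto_const_nhds (x := L / Real.log 10) (f := atTop (α := ℝ)) |>.sub
      (h0.const_mul (Real.log ((d:ℝ)+1) * L / Real.log 10))
    simpa using this
  have hhlim : Tendsto (fun x : ℝ =>
      L / Real.log 10 + (L + 2) * (Real.log x)⁻¹) atTop (nhds (L / Real.log 10)) := by
    have := tendsto_const_nhds (x := L / Real.log 10) (f := atTop (α := ℝ)) |>.add
      (h0.const_mul (L + 2))
    simpa using this
  refine tendsto_of_tendsto_of_tendsto_of_le_of_le' hglim hhlim ?_ ?_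
  · -- lower bound eventually
    filter_upwards [eventually_ge_atTop (100:ℝ)] with x hx
    have hx1 : (1:ℝ) < x := by linarith
    have hlogx : 0 < Real.log x := Real.log_pos hx1
    rw [benford_tsum_eq d hd₁ x]
    rw [le_div_iff₀ hlogx]
    -- choose T_lo
    set r : ℝ := x / ((d:ℝ)+1) with hrdef
    have hr1 : (1:ℝ) ≤ r := by
      rw [hrdef, le_div_iff₀ (by positivity)]
      have : (d:ℝ) ≤ 9 := by exact_mod_cast hd₉
      nlinarith
    have hr0 : (0:ℝ) < r := by linarith
    set T : ℕ := ⌊Real.logb 10 r⌋₊ + 1 with hTdef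
    have hT : ∀ t < T, (((d+1) * 10^t : ℕ) : ℝ) ≤ x := by
      intro t ht
      have ht' : (t:ℝ) ≤ Real.logb 10 r := by
        have h1 : t ≤ ⌊Real.logb 10 r⌋₊ := by omega
        exact le_trans (by exact_mod_cast h1) (Nat.floor_le (Real.logb_nonneg (by norm_num) hr1))
      have hpow : (10:ℝ)^t ≤ r := by
        have := Real.rpow_le_rpow_of_exponent_le (by norm_num : (1:ℝ) ≤ 10) ht'
        rwa [Real.rpow_natCast, Real.rpow_logb (by norm_num) (by norm_num) hr0] at this
      have : ((d:ℝ)+1) * 10^t ≤ x := by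
        rw [hrdef] at hpow
        rw [div_eq_mul_inv] at hpow
        calc ((d:ℝ)+1) * 10^t ≤ ((d:ℝ)+1) * (x * ((d:ℝ)+1)⁻¹) :=
          mul_le_mul_of_nonneg_left hpow (by positivity)
        _ = x := by field_simp
      calc (((d+1) * 10^t : ℕ) : ℝ) = ((d:ℝ)+1) * 10^t := by push_cast; ring
      _ ≤ x := this
    have hlow := sum_lower d hd₁ x T hT
    have hTge : Real.logb 10 r ≤ (T:ℝ) := by
      have := Nat.lt_floor_add_one (Real.logb 10 r)
      push_cast [hTdef]
      push_cast at this
      linarith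
    have hchain : Real.logb 10 r * L ≤ (T:ℝ) * L :=
      mul_le_mul_of_nonneg_right hTge hL0
    have heq : (L / Real.log 10 -
        (Real.log ((d:ℝ)+1) * L / Real.log 10) * (Real.log x)⁻¹) * Real.log x
        = Real.logb 10 r * L := by
      rw [hrdef, Real.logb, Real.log_div (by positivity) (by positivity)]
      field_simp
    rw [heq]
    exact le_trans hchain hlow
  · -- upper bound eventually
    filter_upwards [eventually_ge_atTop (100:ℝ)] with x hx
    have hx1 : (1:ℝ) < x := by linarith
    have hlogx : 0 < Real.log x := Real.log_pos hx1
    rw [benford_tsum_eq d hd₁ x]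
    rw [div_le_iff₀ hlogx]
    set T : ℕ := ⌊Real.logb 10 x⌋₊ + 1 with hTdef
    have hT : ∀ t : ℕ, (((10:ℕ)^t : ℕ) : ℝ) ≤ x → t < T := by
      intro t ht
      have h1 : ((10:ℝ))^(t:ℝ) ≤ x := by
        rw [Real.rpow_natCast]
        exact_mod_cast ht
      have h2 : (t:ℝ) ≤ Real.logb 10 x :=
        (Real.le_logb_iff_rpow_le (by norm_num) (by linarith)).mpr h1
      have h3 : t ≤ ⌊Real.logb 10 x⌋₊ := Nat.le_floor h2
      omega
    have hup := sum_upper d hd₁ x T hT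
    rw [← hLdef] at hup
    have hTle : (T:ℝ) ≤ Real.logb 10 x + 1 := by
      have := Nat.floor_le (Real.logb_nonneg (b := 10) (by norm_num) hx1.le)
      push_cast [hTdef]
      linarith
    have heq : (L / Real.log 10 + (L + 2) * (Real.log x)⁻¹) * Real.log x
        = (Real.logb 10 x + 1) * L + 2 := by
      rw [Real.logb]
      field_simp
      ring
    rw [heq]
    have h5 : (T:ℝ) * L ≤ (Real.logb 10 x + 1) * L := mul_le_mul_of_nonneg_right hTle hL0
    exact le_trans hup (by linarith)
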